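/- For the Mellin–Fejér kernel F⁰₁, the tail sums vanish uniformly: lim_{r→+∞} sup_{u>0} ∑_{|k − log u| > r} F⁰₁(e^{-k}u) = 0. In particular, for u with log u not an integer, (1/(2π)) ∑_{|k−log u|>r} sinc²(log√(e^{-k}u)) ≤ (2/(π√r)) ∑_{k∈ℤ} sin²((log u − k)/2)/|log u − k|^{3/2}, and the right-hand series is bounded by 1 + 2∑_{k≥1} k^{-3/2} uniformly in u. -/

import Mathlib

/-!
Writing `x = e^t`, the kernel is `F⁰₁(e^t) = (2/π) sin²(t/2)/t²`. On the tail `|t| > r` we have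
`t² ≥ √r |t|^{3/2}`, so the tail sum is at most `2/(π√r)` times `∑ₖ sin²((θ-k)/2)/|θ-k|^{3/2}`
with `θ = log u`. This series is bounded uniformly in `θ`: the two terms with `k = ⌊θ⌋, ⌊θ⌋ + 1`
are at most `1/4` since `sin² y ≤ y²`, and the `j`-th remaining term on either side of `θ` is at
most `(j+1)^{-3/2}`.
-/

open Real

/-- `sinc u = sin(πu)/(πu)`, `sinc 0 = 1`. -/
noncomputable def sinc (u : ℝ) : ℝ :=
  if u = 0 then 1 else Real.sin (π * u) / (π * u)

/-- The Mellin–Fejér kernel with `c = 0`, `ρ = 1`. -/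
noncomputable def mellinFejer01 (x : ℝ) : ℝ :=
  1 / (2 * π) * _root_.sinc (Real.log (Real.sqrt x) / π) ^ 2

open Filter Topology

noncomputable def fejerMajorant (t : ℝ) : ℝ :=
  sin (t / 2) ^ 2 / |t| ^ ((3 : ℝ) / 2)

lemma fejerMajorant_nonneg (t : ℝ) : 0 ≤ fejerMajorant t := by
  unfold fejerMajorant; positivity

lemma sq_eq_abs_rpow_one_div_two_mul_abs_rpow_three_div_two (t : ℝ) :
    t ^ 2 = |t| ^ ((1 : ℝ) / 2) * |t| ^ ((3 : ℝ) / 2) := by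
  rw [← rpow_add' (abs_nonneg t) (by norm_num), ← sq_abs, ← rpow_natCast]; norm_num

lemma fejerMajorant_le_one_div_four {t : ℝ} (ht : |t| ≤ 1) : fejerMajorant t ≤ 1 / 4 := by
  rcases eq_or_ne t 0 with rfl | ht0
  · norm_num [fejerMajorant]
  have htpos : 0 < |t| := abs_pos.mpr ht0
  calc fejerMajorant t ≤ (t / 2) ^ 2 / |t| ^ ((3 : ℝ) / 2) := by
        unfold fejerMajorant; gcongr ?_ / _; exact sin_sq_le_sq
    _ = |t| ^ ((1 : ℝ) / 2) / 4 := by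
        rw [div_pow, sq_eq_abs_rpow_one_div_two_mul_abs_rpow_three_div_two t]
        field_simp
        norm_num
    _ ≤ 1 / 4 := by gcongr; exact rpow_le_one (abs_nonneg t) ht (by norm_num)

lemma fejerMajorant_le_rpow {t a : ℝ} (ha : 0 < a) (hat : a ≤ |t|) :
    fejerMajorant t ≤ a ^ (-(3 : ℝ) / 2) := by
  calc fejerMajorant t ≤ 1 / a ^ ((3 : ℝ) / 2) := by
        unfold fejerMajorant
        gcongr
        exact sin_sq_le_one _
    _ = a ^ (-(3 : ℝ) / 2) := by rw [neg_div, rpow_neg ha.le, one_div]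

lemma sin_sq_div_sq_le_fejerMajorant {r t : ℝ} (hr : 0 < r) (hrt : r < |t|) :
    sin (t / 2) ^ 2 / t ^ 2 ≤ fejerMajorant t / √r := by
  have htpos : 0 < |t| := hr.trans hrt
  have hsqrt : √r ≤ |t| ^ ((1 : ℝ) / 2) := by
    rw [sqrt_eq_rpow]; exact rpow_le_rpow hr.le hrt.le (by norm_num)
  rw [sq_eq_abs_rpow_one_div_two_mul_abs_rpow_three_div_two t, fejerMajorant, div_div,
    mul_comm (|t| ^ _)]
  gcongr

lemma sinc_div_pi {t : ℝ} (ht : t ≠ 0) : _root_.sinc (t / π) = sin t / t := by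
  rw [_root_.sinc, if_neg (div_ne_zero ht pi_ne_zero), mul_div_cancel₀ _ pi_ne_zero]

lemma mellinFejer01_nonneg (x : ℝ) : 0 ≤ mellinFejer01 x := by
  unfold mellinFejer01; positivity

lemma mellinFejer01_exp {t : ℝ} (ht : t ≠ 0) :
    mellinFejer01 (exp t) = 2 / π * (sin (t / 2) ^ 2 / t ^ 2) := by
  rw [mellinFejer01, log_sqrt (exp_pos t).le, log_exp, sinc_div_pi (by simpa using ht)]
  field_simp

lemma mellinFejer01_exp_le {r t : ℝ} (hr : 0 < r) (hrt : r < |t|) :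
    mellinFejer01 (exp t) ≤ 2 / (π * √r) * fejerMajorant t := by
  have ht : t ≠ 0 := abs_pos.mp (hr.trans hrt)
  calc mellinFejer01 (exp t) ≤ 2 / π * (fejerMajorant t / √r) := by
        rw [mellinFejer01_exp ht]; gcongr 2 / π * ?_; exact sin_sq_div_sq_le_fejerMajorant hr hrt
    _ = 2 / (π * √r) * fejerMajorant t := by ring

lemma summable_nat_add_one_rpow_neg_three_div_two :
    Summable fun k : ℕ => ((k : ℝ) + 1) ^ (-(3 : ℝ) / 2) := by
  have := (summable_nat_add_iff 1).mpr (summable_nat_rpow.mpr (by norm_num : -(3 : ℝ) / 2 < -1))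
  simpa only [Nat.cast_add, Nat.cast_one] using this

section FractionalPart

variable {x : ℝ}

lemma fejerMajorant_sub_natCast_add_two_le (hx₁ : x < 1) (j : ℕ) :
    fejerMajorant (x - (j + 2 : ℕ)) ≤ ((j : ℝ) + 1) ^ (-(3 : ℝ) / 2) := by
  apply fejerMajorant_le_rpow (by positivity)
  rw [abs_sub_comm, abs_of_pos (by push_cast; linarith)]
  push_cast; linarith

lemma fejerMajorant_sub_neg_add_one_le (hx₀ : 0 ≤ x) (j : ℕ) :
    fejerMajorant (x - (-(j + 1 : ℤ) : ℤ)) ≤ ((j : ℝ) + 1) ^ (-(3 : ℝ) / 2) := by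
  apply fejerMajorant_le_rpow (by positivity)
  push_cast
  rw [sub_neg_eq_add, abs_of_pos (by positivity)]
  linarith

lemma summable_fejerMajorant_sub_natCast (hx₁ : x < 1) :
    Summable fun n : ℕ => fejerMajorant (x - n) :=
  (summable_nat_add_iff 2).mp <| summable_nat_add_one_rpow_neg_three_div_two.of_nonneg_of_le
    (fun _ => fejerMajorant_nonneg _) (fejerMajorant_sub_natCast_add_two_le hx₁)

lemma summable_fejerMajorant_sub_neg_add_one (hx₀ : 0 ≤ x) :
    Summable fun n : ℕ => fejerMajorant (x - (-(n + 1 : ℤ) : ℤ)) :=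
  summable_nat_add_one_rpow_neg_three_div_two.of_nonneg_of_le
    (fun _ => fejerMajorant_nonneg _) (fejerMajorant_sub_neg_add_one_le hx₀)

lemma tsum_fejerMajorant_sub_natCast_le (hx₀ : 0 ≤ x) (hx₁ : x < 1) :
    ∑' n : ℕ, fejerMajorant (x - n) ≤ 1 / 2 + ∑' k : ℕ, ((k : ℝ) + 1) ^ (-(3 : ℝ) / 2) := by
  have hshift : Summable fun n : ℕ => fejerMajorant (x - (n + 2 : ℕ)) :=
    (summable_nat_add_iff 2).mpr (summable_fejerMajorant_sub_natCast hx₁)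
  have hnear (n : ℕ) (hn : n ≤ 1) : fejerMajorant (x - n) ≤ 1 / 4 := by
    apply fejerMajorant_le_one_div_four
    interval_cases n <;> (rw [abs_le]; constructor <;> push_cast <;> linarith)
  rw [← Summable.sum_add_tsum_nat_add' (f := fun n : ℕ => fejerMajorant (x - n)) hshift,
    Finset.sum_range_succ, Finset.sum_range_one]
  have hfar :
      ∑' n : ℕ, fejerMajorant (x - (n + 2 : ℕ)) ≤ ∑' k : ℕ, ((k : ℝ) + 1) ^ (-(3 : ℝ) / 2) :=
    hshift.tsum_le_tsum (fejerMajorant_sub_natCast_add_two_le hx₁)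
      summable_nat_add_one_rpow_neg_three_div_two
  have h0 := hnear 0 zero_le_one
  have h1 := hnear 1 le_rfl
  push_cast at h0 h1 hfar ⊢
  linarith

end FractionalPart

lemma fejerMajorant_sub_floor_add (θ : ℝ) (n : ℤ) :
    fejerMajorant (θ - (⌊θ⌋ + n : ℤ)) = fejerMajorant (Int.fract θ - n) := by
  rw [Int.fract]; push_cast; ring_nf

lemma summable_fejerMajorant_sub_intCast (θ : ℝ) :
    Summable fun k : ℤ => fejerMajorant (θ - k) := by
  rw [← (Equiv.addLeft ⌊θ⌋).summable_iff]
  simp only [Function.comp_def, Equiv.coe_addLeft, fejerMajorant_sub_floor_add]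
  exact .of_nat_of_neg_add_one (summable_fejerMajorant_sub_natCast (Int.fract_lt_one θ))
    (summable_fejerMajorant_sub_neg_add_one (Int.fract_nonneg θ))

lemma tsum_fejerMajorant_sub_intCast_le (θ : ℝ) :
    ∑' k : ℤ, fejerMajorant (θ - k) ≤ 1 + 2 * ∑' k : ℕ, ((k : ℝ) + 1) ^ (-(3 : ℝ) / 2) := by
  have hx₀ := Int.fract_nonneg θ
  have hx₁ := Int.fract_lt_one θ
  rw [← (Equiv.addLeft ⌊θ⌋).tsum_eq]
  simp only [Equiv.coe_addLeft, fejerMajorant_sub_floor_add]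
  rw [tsum_of_nat_of_neg_add_one (f := fun n : ℤ => fejerMajorant (Int.fract θ - n))
    (summable_fejerMajorant_sub_natCast hx₁)
    (summable_fejerMajorant_sub_neg_add_one hx₀)]
  have hneg := (summable_fejerMajorant_sub_neg_add_one hx₀).tsum_le_tsum
    (fejerMajorant_sub_neg_add_one_le hx₀) summable_nat_add_one_rpow_neg_three_div_two
  have hpos : 0 ≤ ∑' k : ℕ, ((k : ℝ) + 1) ^ (-(3 : ℝ) / 2) := tsum_nonneg fun _ => by positivity
  simp only [Int.cast_natCast]
  linarith [tsum_fejerMajorant_sub_natCast_le hx₀ hx₁]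

lemma tsum_tail_mellinFejer01_le {r u : ℝ} (hr : 0 < r) (hu : 0 < u) :
    ∑' k : {k : ℤ // r < |(k : ℝ) - log u|}, mellinFejer01 (exp (-(k : ℤ)) * u)
      ≤ 2 / (π * √r) * ∑' k : ℤ, fejerMajorant (log u - k) := by
  have hsum := summable_fejerMajorant_sub_intCast (log u)
  have hterm (k : {k : ℤ // r < |(k : ℝ) - log u|}) :
      mellinFejer01 (exp (-(k : ℤ)) * u) ≤ 2 / (π * √r) * fejerMajorant (log u - k) := by
    have hexp : exp (-(k : ℤ)) * u = exp (log u - k) := by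
      rw [sub_eq_neg_add, exp_add, exp_log hu]
    rw [hexp]
    exact mellinFejer01_exp_le hr (by rw [abs_sub_comm]; exact k.2)
  have hsum' := (hsum.subtype {k : ℤ | r < |(k : ℝ) - log u|}).mul_left (2 / (π * √r))
  calc _ ≤ ∑' k : {k : ℤ // r < |(k : ℝ) - log u|}, 2 / (π * √r) * fejerMajorant (log u - k) :=
        (hsum'.of_nonneg_of_le (fun _ => mellinFejer01_nonneg _) hterm).tsum_le_tsum hterm hsum'
    _ ≤ 2 / (π * √r) * ∑' k : ℤ, fejerMajorant (log u - k) := by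
        rw [tsum_mul_left]
        gcongr
        exact hsum.tsum_subtype_le _ _ fun _ => fejerMajorant_nonneg _

lemma tendsto_two_div_pi_mul_sqrt_mul_atTop (C : ℝ) :
    Tendsto (fun r => 2 / (π * √r) * C) atTop (𝓝 0) := by
  simpa using ((tendsto_const_nhds (x := (2 : ℝ))).div_atTop
    (tendsto_sqrt_atTop.const_mul_atTop pi_pos)).mul_const C

/-- Uniform vanishing of the tails of the Mellin–Fejér kernel, together with the
key quantitative estimates. -/
theorem mellinFejer01_tails_vanish :
    (∀ ε > (0:ℝ), ∃ r₀ : ℝ, ∀ r ≥ r₀, ∀ u : ℝ, 0 < u →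
      ∑' k : {k : ℤ // r < |(k : ℝ) - Real.log u|},
        mellinFejer01 (Real.exp (-(k:ℤ)) * u) < ε) ∧
    (∀ r > (0:ℝ), ∀ u : ℝ, 0 < u → (∀ k : ℤ, Real.log u ≠ k) →
      ∑' k : {k : ℤ // r < |(k : ℝ) - Real.log u|},
          mellinFejer01 (Real.exp (-(k:ℤ)) * u)
        ≤ 2 / (π * Real.sqrt r) *
          ∑' k : ℤ, Real.sin ((Real.log u - k) / 2) ^ 2 /
            |Real.log u - (k : ℝ)| ^ ((3:ℝ)/2)) ∧
    (∀ u : ℝ, 0 < u → (∀ k : ℤ, Real.log u ≠ k) →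
      ∑' k : ℤ, Real.sin ((Real.log u - k) / 2) ^ 2 /
          |Real.log u - (k : ℝ)| ^ ((3:ℝ)/2)
        ≤ 1 + 2 * ∑' k : ℕ, ((k : ℝ) + 1) ^ (-(3:ℝ)/2)) := by
  set C := 1 + 2 * ∑' k : ℕ, ((k : ℝ) + 1) ^ (-(3:ℝ)/2)
  refine ⟨fun ε hε => ?_, fun r hr u hu _ => tsum_tail_mellinFejer01_le hr hu,
    fun u _ _ => tsum_fejerMajorant_sub_intCast_le (log u)⟩
  obtain ⟨r₀, hr₀⟩ := eventually_atTop.mp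
    (((tendsto_two_div_pi_mul_sqrt_mul_atTop C).eventually (gt_mem_nhds hε)).and
      (eventually_gt_atTop 0))
  refine ⟨r₀, fun r hr u hu => ?_⟩
  obtain ⟨hlt, hrpos⟩ := hr₀ r hr
  calc _ ≤ 2 / (π * √r) * ∑' k : ℤ, fejerMajorant (log u - k) :=
        tsum_tail_mellinFejer01_le hrpos hu
    _ ≤ 2 / (π * √r) * C := by gcongr; exact tsum_fejerMajorant_sub_intCast_le (log u)
    _ < ε := hlt
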